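/- arXiv:2208.11545 — 2 statements merged into one kernel-verified Lean document; each statement's English description precedes it below -/
import Mathlib

section
/- Let ξ ~ Poisson(λ), h : ℕ → ℝ polynomially bounded with Δ²h(0) ≠ 0, r_λ = λ⁻¹Cov(h(ξ),ξ), and σ²(h) = Var(h(ξ) - r_λ ξ). Then as λ → 0, σ²(h) = (λ²/2)(Δ²h(0))² · (1 + O(λ)). In particular, the coefficient of λ in the expansion of σ²(h) vanishes. -/
open Real Filter Asymptotics Topology
open scoped BigOperators

/-- Poisson probability mass function with parameter `l`. -/
noncomputable def poisPMF (l : ℝ) (k : ℕ) : ℝ := Real.exp (-l) * l ^ k / (Nat.factorial k)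

/-- Expectation of `f ξ` for `ξ ~ Poisson(l)`. -/
noncomputable def pE (l : ℝ) (f : ℕ → ℝ) : ℝ := ∑' k, poisPMF l k * f k

/-- Covariance under `Poisson(l)`. -/
noncomputable def pCov (l : ℝ) (f g : ℕ → ℝ) : ℝ :=
  pE l (fun k => f k * g k) - pE l f * pE l g

/-- Variance under `Poisson(l)`. -/
noncomputable def pVar (l : ℝ) (f : ℕ → ℝ) : ℝ := pCov l f f

/-- Pearson correlation under `Poisson(l)`. -/
noncomputable def pCorr (l : ℝ) (f g : ℕ → ℝ) : ℝ :=
  pCov l f g / (Real.sqrt (pVar l f) * Real.sqrt (pVar l g))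

noncomputable def pT (g : ℕ → ℝ) (l : ℝ) : ℝ := ∑' k, g k * l ^ k / (Nat.factorial k)

lemma pE_eq (l : ℝ) (f : ℕ → ℝ) : pE l f = Real.exp (-l) * pT f l := by
  unfold pE poisPMF pT
  rw [← tsum_mul_left]
  exact tsum_congr fun k => by ring

lemma pT_expansion (g : ℕ → ℝ) (C : ℝ) (p : ℕ) (hC : 0 ≤ C)
    (hg : ∀ k, |g k| ≤ C * ((k : ℝ) + 1) ^ p) :
    (fun l : ℝ => pT g l - (g 0 + g 1 * l + g 2 * l ^ 2 / 2)) =O[𝓝[>] (0 : ℝ)]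
      fun l : ℝ => l ^ 3 := by
  have hsum2p : Summable (fun k : ℕ => ((2:ℝ) ^ p) ^ k / (Nat.factorial k)) :=
    Real.summable_pow_div_factorial _
  have hkpow : ∀ k : ℕ, ((k : ℝ) + 1) ^ p ≤ ((2:ℝ) ^ p) ^ k := by
    intro k
    have h2k : ((k : ℝ) + 1) ≤ 2 ^ k := by
      have h := Nat.lt_two_pow_self (n := k)
      have h' : (k + 1 : ℕ) ≤ 2 ^ k := h
      exact_mod_cast h'
    calc ((k : ℝ) + 1) ^ p ≤ ((2:ℝ) ^ k) ^ p := by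
          gcongr
      _ = ((2:ℝ) ^ p) ^ k := by rw [← pow_mul, ← pow_mul, mul_comm]
  rw [isBigO_iff]
  refine ⟨C * 4 ^ p * ∑' k : ℕ, ((2:ℝ) ^ p) ^ k / (Nat.factorial k), ?_⟩
  filter_upwards [Ioo_mem_nhdsGT (by norm_num : (0:ℝ) < 1)] with l hl
  obtain ⟨hl0, hl1⟩ := hl
  set f : ℕ → ℝ := fun k => g k * l ^ k / (Nat.factorial k) with hf
  have hfb : ∀ k, ‖f k‖ ≤ C * (((2:ℝ) ^ p) ^ k / (Nat.factorial k)) := by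
    intro k
    have h1 : |g k| * l ^ k ≤ C * ((2:ℝ) ^ p) ^ k := by
      calc |g k| * l ^ k ≤ (C * ((k : ℝ) + 1) ^ p) * 1 :=
            mul_le_mul (hg k) (pow_le_one₀ hl0.le hl1.le) (pow_nonneg hl0.le _) (by positivity)
        _ = C * ((k : ℝ) + 1) ^ p := mul_one _
        _ ≤ C * ((2:ℝ) ^ p) ^ k := mul_le_mul_of_nonneg_left (hkpow k) hC
    have h2 : ‖f k‖ = |g k| * l ^ k / (Nat.factorial k : ℝ) := by
      rw [hf]
      rw [Real.norm_eq_abs, abs_div, abs_mul, abs_of_nonneg (pow_nonneg hl0.le k), Nat.abs_cast]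
    rw [h2]
    calc |g k| * l ^ k / (Nat.factorial k : ℝ) ≤ (C * ((2:ℝ) ^ p) ^ k) / (Nat.factorial k : ℝ) := by
          gcongr
      _ = C * (((2:ℝ) ^ p) ^ k / (Nat.factorial k : ℝ)) := by ring
  have hsumf : Summable f := Summable.of_norm_bounded (hsum2p.mul_left C) hfb
  have htail : pT g l - (g 0 + g 1 * l + g 2 * l ^ 2 / 2) = ∑' i, f (i + 3) := by
    have hsplit := Summable.sum_add_tsum_nat_add (f := f) 3 hsumf
    have h3 : ∑ i ∈ Finset.range 3, f i = g 0 + g 1 * l + g 2 * l ^ 2 / 2 := by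
      rw [hf]
      simp [Finset.sum_range_succ, Nat.factorial]
    have hptg : pT g l = ∑' k, f k := by rw [pT, hf]
    rw [hptg, ← hsplit, h3]
    ring
  have hbnd2 : ∀ i : ℕ, ‖f (i + 3)‖ ≤ C * 4 ^ p * (((2:ℝ) ^ p) ^ i / (Nat.factorial i)) * l ^ 3 := by
    intro i
    have hg3 : |g (i + 3)| ≤ C * ((i : ℝ) + 4) ^ p := by
      have h := hg (i + 3)
      push_cast at h
      ring_nf at h ⊢
      convert h using 2
    have hp4 : ((i : ℝ) + 4) ^ p ≤ 4 ^ p * ((2:ℝ) ^ p) ^ i := by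
      calc ((i:ℝ) + 4) ^ p ≤ ((4:ℝ) * ((i:ℝ) + 1)) ^ p :=
            pow_le_pow_left₀ (by positivity) (by linarith [Nat.cast_nonneg (α := ℝ) i]) p
        _ = 4 ^ p * ((i:ℝ) + 1) ^ p := mul_pow _ _ _
        _ ≤ 4 ^ p * ((2:ℝ) ^ p) ^ i := mul_le_mul_of_nonneg_left (hkpow i) (by positivity)
    have hlpow : l ^ (i + 3) ≤ l ^ 3 := pow_le_pow_of_le_one hl0.le hl1.le (by omega)
    have hfact : (Nat.factorial i : ℝ) ≤ (Nat.factorial (i + 3) : ℝ) := by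
      exact_mod_cast Nat.factorial_le (by omega)
    have hnorm : ‖f (i + 3)‖ = |g (i + 3)| * l ^ (i + 3) / (Nat.factorial (i + 3) : ℝ) := by
      rw [hf]
      rw [Real.norm_eq_abs, abs_div, abs_mul, abs_of_nonneg (pow_nonneg hl0.le _), Nat.abs_cast]
    rw [hnorm]
    calc |g (i + 3)| * l ^ (i + 3) / (Nat.factorial (i + 3) : ℝ)
        ≤ (C * ((i:ℝ) + 4) ^ p) * l ^ 3 / (Nat.factorial i : ℝ) :=
          div_le_div₀ (by positivity)
            (mul_le_mul hg3 hlpow (by positivity) (by positivity))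
            (by positivity) hfact
      _ ≤ (C * (4 ^ p * ((2:ℝ) ^ p) ^ i)) * l ^ 3 / (Nat.factorial i : ℝ) := by gcongr
      _ = C * 4 ^ p * (((2:ℝ) ^ p) ^ i / (Nat.factorial i : ℝ)) * l ^ 3 := by ring
  have hbig : Summable (fun i : ℕ => C * 4 ^ p * (((2:ℝ) ^ p) ^ i / (Nat.factorial i)) * l ^ 3) :=
    (hsum2p.mul_left (C * 4 ^ p)).mul_right (l ^ 3)
  have hnorms : Summable (fun i : ℕ => ‖f (i + 3)‖) :=
    Summable.of_nonneg_of_le (fun i => norm_nonneg _) hbnd2 hbig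
  rw [htail]
  calc ‖∑' i, f (i + 3)‖ ≤ ∑' i, ‖f (i + 3)‖ := norm_tsum_le_tsum_norm hnorms
    _ ≤ ∑' i : ℕ, C * 4 ^ p * (((2:ℝ) ^ p) ^ i / (Nat.factorial i)) * l ^ 3 :=
        Summable.tsum_le_tsum hbnd2 hnorms hbig
    _ = C * 4 ^ p * (∑' k : ℕ, ((2:ℝ) ^ p) ^ k / (Nat.factorial k)) * l ^ 3 := by
        rw [tsum_mul_right, tsum_mul_left]
    _ = C * 4 ^ p * (∑' k : ℕ, ((2:ℝ) ^ p) ^ k / (Nat.factorial k)) * ‖l ^ 3‖ := by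
        rw [Real.norm_eq_abs, abs_of_nonneg (by positivity)]

/-- For polynomially bounded `h` with `Δ²h(0) ≠ 0`, as `λ → 0⁺`,
`σ²(h) = Var h(ξ) - λ r_λ² = (λ²/2)(Δ²h(0))² (1 + O(λ))`, i.e. the coefficient
of `λ` vanishes and the error beyond the `λ²` term is `O(λ³)`. -/
theorem sigma_sq_expansion_at_zero (h : ℕ → ℝ)
    (hbound : ∃ C : ℝ, ∃ p : ℕ, ∀ k : ℕ, |h k| ≤ C * ((k : ℝ) + 1) ^ p)
    (hΔ : h 2 - 2 * h 1 + h 0 ≠ 0) :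
    (fun l : ℝ => (pVar l h - (pCov l h (fun k => (k : ℝ))) ^ 2 / l)
        - l ^ 2 / 2 * (h 2 - 2 * h 1 + h 0) ^ 2)
      =O[𝓝[>] (0 : ℝ)] fun l : ℝ => l ^ 3 := by
  obtain ⟨C, p, hb⟩ := hbound
  have hC : 0 ≤ C := by
    have h0 := hb 0
    norm_num at h0
    linarith [abs_nonneg (h 0)]
  set Fil := 𝓝[>] (0 : ℝ) with hFil
  -- error expansions for the power series
  have hE1 : (fun l : ℝ => pT h l - (h 0 + h 1 * l + h 2 * l ^ 2 / 2)) =O[Fil]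
      (fun l : ℝ => l ^ 3) := pT_expansion h C p hC hb
  have hb2 : ∀ k : ℕ, |h k * h k| ≤ C * C * ((k : ℝ) + 1) ^ (p + p) := by
    intro k
    rw [abs_mul, pow_add]
    calc |h k| * |h k| ≤ (C * ((k : ℝ) + 1) ^ p) * (C * ((k : ℝ) + 1) ^ p) :=
          mul_le_mul (hb k) (hb k) (abs_nonneg _) (by positivity)
      _ = C * C * (((k : ℝ) + 1) ^ p * ((k : ℝ) + 1) ^ p) := by ring
  have hE2 : (fun l : ℝ => pT (fun k => h k * h k) l
      - (h 0 * h 0 + h 1 * h 1 * l + h 2 * h 2 * l ^ 2 / 2)) =O[Fil] (fun l : ℝ => l ^ 3) :=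
    (pT_expansion (fun k => h k * h k) (C * C) (p + p) (mul_nonneg hC hC) hb2).congr_left
      fun l => by norm_num
  have hb3 : ∀ k : ℕ, |h k * (k : ℝ)| ≤ C * ((k : ℝ) + 1) ^ (p + 1) := by
    intro k
    rw [abs_mul, pow_succ, abs_of_nonneg (Nat.cast_nonneg (α := ℝ) k)]
    calc |h k| * (k : ℝ) ≤ (C * ((k : ℝ) + 1) ^ p) * ((k : ℝ) + 1) :=
          mul_le_mul (hb k) (by linarith) (Nat.cast_nonneg k) (by positivity)
      _ = C * (((k : ℝ) + 1) ^ p * ((k : ℝ) + 1)) := by ring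
  have hE3 : (fun l : ℝ => pT (fun k => h k * (k : ℝ)) l - (h 1 * l + h 2 * l ^ 2))
      =O[Fil] (fun l : ℝ => l ^ 3) :=
    (pT_expansion (fun k => h k * (k : ℝ)) C (p + 1) hC hb3).congr_left
      fun l => by norm_num; ring
  have hb4 : ∀ k : ℕ, |(k : ℝ)| ≤ 1 * ((k : ℝ) + 1) ^ 1 := by
    intro k
    rw [abs_of_nonneg (Nat.cast_nonneg (α := ℝ) k)]
    norm_num
  have hE6 : (fun l : ℝ => pT (fun k => (k : ℝ)) l - (l + l ^ 2))
      =O[Fil] (fun l : ℝ => l ^ 3) :=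
    (pT_expansion (fun k => (k : ℝ)) 1 1 one_pos.le hb4).congr_left
      fun l => by norm_num
  -- exponential expansions
  have hE4 : (fun l : ℝ => Real.exp (-l) - (1 - l + l ^ 2 / 2)) =O[Fil]
      (fun l : ℝ => l ^ 3) := by
    rw [isBigO_iff]
    refine ⟨2 / 9, ?_⟩
    filter_upwards [Ioo_mem_nhdsGT (by norm_num : (0:ℝ) < 1)] with l hl
    obtain ⟨hl0, hl1⟩ := hl
    have hx : |(-l)| ≤ 1 := by rw [abs_neg, abs_of_nonneg hl0.le]; exact hl1.le
    have hbd := Real.exp_bound hx (n := 3) (by norm_num)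
    have hsum : ∑ m ∈ Finset.range 3, (-l) ^ m / (Nat.factorial m : ℝ) = 1 - l + l ^ 2 / 2 := by
      simp [Finset.sum_range_succ, Nat.factorial]
      ring
    rw [hsum] at hbd
    rw [Real.norm_eq_abs, Real.norm_eq_abs]
    calc |Real.exp (-l) - (1 - l + l ^ 2 / 2)|
        ≤ |(-l)| ^ 3 * ((3:ℕ).succ / ((Nat.factorial 3 : ℝ) * 3)) := hbd
      _ = 2 / 9 * |l ^ 3| := by
          rw [abs_neg, abs_of_nonneg hl0.le, abs_of_nonneg (by positivity : (0:ℝ) ≤ l ^ 3)]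
          norm_num [Nat.factorial]
          ring
  have hE5 : (fun l : ℝ => Real.exp (-l) ^ 2 - (1 - 2 * l + 2 * l ^ 2)) =O[Fil]
      (fun l : ℝ => l ^ 3) := by
    rw [isBigO_iff]
    refine ⟨16 / 9, ?_⟩
    filter_upwards [Ioo_mem_nhdsGT (by norm_num : (0:ℝ) < 1/2)] with l hl
    obtain ⟨hl0, hl1⟩ := hl
    have hexp2 : Real.exp (-l) ^ 2 = Real.exp (-(2 * l)) := by
      rw [sq, ← Real.exp_add]; ring_nf
    have hx : |(-(2 * l))| ≤ 1 := by
      rw [abs_neg, abs_of_nonneg (by linarith)]; linarith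
    have hbd := Real.exp_bound hx (n := 3) (by norm_num)
    have hsum : ∑ m ∈ Finset.range 3, (-(2 * l)) ^ m / (Nat.factorial m : ℝ)
        = 1 - 2 * l + 2 * l ^ 2 := by
      simp [Finset.sum_range_succ, Nat.factorial]
      ring
    rw [hsum] at hbd
    rw [Real.norm_eq_abs, Real.norm_eq_abs, hexp2]
    calc |Real.exp (-(2 * l)) - (1 - 2 * l + 2 * l ^ 2)|
        ≤ |(-(2 * l))| ^ 3 * ((3:ℕ).succ / ((Nat.factorial 3 : ℝ) * 3)) := hbd
      _ = 16 / 9 * |l ^ 3| := by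
          rw [abs_neg, abs_of_nonneg (by linarith : (0:ℝ) ≤ 2 * l),
            abs_of_nonneg (by positivity : (0:ℝ) ≤ l ^ 3)]
          norm_num [Nat.factorial]
          ring
  -- boundedness machinery
  have Opoly : ∀ f : ℝ → ℝ, Continuous f → f =O[Fil] (fun _ : ℝ => (1:ℝ)) := fun f hf =>
    Filter.Tendsto.isBigO_one ℝ ((hf.tendsto 0).mono_left nhdsWithin_le_nhds)
  have hO3 : (fun l : ℝ => l ^ 3) =O[Fil] (fun _ : ℝ => (1:ℝ)) := Opoly _ (by fun_prop)
  have OmulOne : ∀ f g : ℝ → ℝ, f =O[Fil] (fun _ : ℝ => (1:ℝ)) → g =O[Fil] (fun _ : ℝ => (1:ℝ)) →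
      (fun l => f l * g l) =O[Fil] (fun _ : ℝ => (1:ℝ)) := fun f g hf hg =>
    (hf.mul hg).congr_right fun x => one_mul _
  have Omul : ∀ f g : ℝ → ℝ, f =O[Fil] (fun _ : ℝ => (1:ℝ)) → g =O[Fil] (fun l : ℝ => l ^ 3) →
      (fun l => f l * g l) =O[Fil] (fun l : ℝ => l ^ 3) := fun f g hf hg =>
    (hf.mul hg).congr_right fun x => one_mul _
  have Omul' : ∀ f g : ℝ → ℝ, f =O[Fil] (fun l : ℝ => l ^ 3) → g =O[Fil] (fun _ : ℝ => (1:ℝ)) →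
      (fun l => f l * g l) =O[Fil] (fun l : ℝ => l ^ 3) := fun f g hf hg =>
    (hf.mul hg).congr_right fun x => mul_one _
  have hOu : (fun l : ℝ => Real.exp (-l)) =O[Fil] (fun _ : ℝ => (1:ℝ)) := Opoly _ (by fun_prop)
  have hOu2 : (fun l : ℝ => Real.exp (-l) ^ 2) =O[Fil] (fun _ : ℝ => (1:ℝ)) :=
    Opoly _ (by fun_prop)
  have hOA : (fun l : ℝ => pT h l) =O[Fil] (fun _ : ℝ => (1:ℝ)) := by
    have h1 : (fun l : ℝ => h 0 + h 1 * l + h 2 * l ^ 2 / 2) =O[Fil] (fun _ : ℝ => (1:ℝ)) :=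
      Opoly _ (by fun_prop)
    exact (h1.add (hE1.trans hO3)).congr_left fun l => by ring
  have hPaO : (fun l : ℝ => h 0 + h 1 * l + h 2 * l ^ 2 / 2) =O[Fil] (fun _ : ℝ => (1:ℝ)) :=
    Opoly _ (by fun_prop)
  -- the combined error term E
  have hOE : (fun l : ℝ => Real.exp (-l) * (pT (fun k => h k * (k : ℝ)) l - (h 1 * l + h 2 * l ^ 2))
      - Real.exp (-l) ^ 2 * pT h l * (pT (fun k => (k : ℝ)) l - (l + l ^ 2)))
      =O[Fil] (fun l : ℝ => l ^ 3) :=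
    (Omul _ _ hOu hE3).sub (Omul _ _ (OmulOne _ _ hOu2 hOA) hE6)
  have hOs : (fun l : ℝ => Real.exp (-l) * (h 1 + h 2 * l)
      - Real.exp (-l) ^ 2 * pT h l * (1 + l)) =O[Fil] (fun _ : ℝ => (1:ℝ)) :=
    (OmulOne _ _ hOu (Opoly _ (by fun_prop))).sub
      (OmulOne _ _ (OmulOne _ _ hOu2 hOA) (Opoly _ (by fun_prop)))
  have hOst : (fun l : ℝ => (1 - l + l ^ 2 / 2) * (h 1 + h 2 * l)
      - (1 - 2 * l + 2 * l ^ 2) * (h 0 + h 1 * l + h 2 * l ^ 2 / 2) * (1 + l))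
      =O[Fil] (fun _ : ℝ => (1:ℝ)) := Opoly _ (by fun_prop)
  have hRs : (fun l : ℝ => (Real.exp (-l) - (1 - l + l ^ 2 / 2)) * (h 1 + h 2 * l) - (Real.exp (-l) ^ 2 * (pT h l - (h 0 + h 1 * l + h 2 * l ^ 2 / 2)) + (Real.exp (-l) ^ 2 - (1 - 2 * l + 2 * l ^ 2)) * (h 0 + h 1 * l + h 2 * l ^ 2 / 2)) * (1 + l))
      =O[Fil] (fun l : ℝ => l ^ 3) :=
    (Omul' _ _ hE4 (Opoly _ (by fun_prop))).sub
      (Omul' _ _ ((Omul _ _ hOu2 hE1).add (Omul' _ _ hE5 hPaO)) (Opoly _ (by fun_prop)))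
  have hR2 : (fun l : ℝ => Real.exp (-l) * (pT (fun k => h k * h k) l - (h 0 * h 0 + h 1 * h 1 * l + h 2 * h 2 * l ^ 2 / 2)) + (Real.exp (-l) - (1 - l + l ^ 2 / 2)) * (h 0 * h 0 + h 1 * h 1 * l + h 2 * h 2 * l ^ 2 / 2)) =O[Fil] (fun l : ℝ => l ^ 3) :=
    (Omul _ _ hOu hE2).add (Omul' _ _ hE4 (Opoly _ (by fun_prop)))
  have hR3 : (fun l : ℝ => Real.exp (-l) ^ 2 * (pT h l + (h 0 + h 1 * l + h 2 * l ^ 2 / 2)) * (pT h l - (h 0 + h 1 * l + h 2 * l ^ 2 / 2)) + (Real.exp (-l) ^ 2 - (1 - 2 * l + 2 * l ^ 2)) * ((h 0 + h 1 * l + h 2 * l ^ 2 / 2) * (h 0 + h 1 * l + h 2 * l ^ 2 / 2)))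
      =O[Fil] (fun l : ℝ => l ^ 3) :=
    (Omul _ _ (OmulOne _ _ hOu2 (hOA.add hPaO)) hE1).add
      (Omul' _ _ hE5 (OmulOne _ _ hPaO hPaO))
  have hR4 : (fun l : ℝ => l * ((Real.exp (-l) * (h 1 + h 2 * l) - Real.exp (-l) ^ 2 * pT h l * (1 + l)) + ((1 - l + l ^ 2 / 2) * (h 1 + h 2 * l) - (1 - 2 * l + 2 * l ^ 2) * (h 0 + h 1 * l + h 2 * l ^ 2 / 2) * (1 + l))) * ((Real.exp (-l) - (1 - l + l ^ 2 / 2)) * (h 1 + h 2 * l) - (Real.exp (-l) ^ 2 * (pT h l - (h 0 + h 1 * l + h 2 * l ^ 2 / 2)) + (Real.exp (-l) ^ 2 - (1 - 2 * l + 2 * l ^ 2)) * (h 0 + h 1 * l + h 2 * l ^ 2 / 2)) * (1 + l))) =O[Fil] (fun l : ℝ => l ^ 3) :=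
    Omul _ _ (OmulOne _ _ (Opoly _ (by fun_prop)) (hOs.add hOst)) hRs
  have hR5 : (fun l : ℝ => 2 * (Real.exp (-l) * (h 1 + h 2 * l) - Real.exp (-l) ^ 2 * pT h l * (1 + l)) * (Real.exp (-l) * (pT (fun k => h k * (k : ℝ)) l - (h 1 * l + h 2 * l ^ 2)) - Real.exp (-l) ^ 2 * pT h l * (pT (fun k => (k : ℝ)) l - (l + l ^ 2)))) =O[Fil] (fun l : ℝ => l ^ 3) :=
    Omul _ _ (OmulOne _ _ (Opoly _ (by fun_prop)) hOs) hOE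
  have hR6 : (fun l : ℝ => (Real.exp (-l) * (pT (fun k => h k * (k : ℝ)) l - (h 1 * l + h 2 * l ^ 2)) - Real.exp (-l) ^ 2 * pT h l * (pT (fun k => (k : ℝ)) l - (l + l ^ 2))) * (Real.exp (-l) * (pT (fun k => h k * (k : ℝ)) l - (h 1 * l + h 2 * l ^ 2)) - Real.exp (-l) ^ 2 * pT h l * (pT (fun k => (k : ℝ)) l - (l + l ^ 2))) / l) =O[Fil] (fun l : ℝ => l ^ 3) := by
    obtain ⟨cE, hcE⟩ := hOE.bound
    rw [isBigO_iff]
    refine ⟨cE * cE, ?_⟩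
    rw [hFil]
    rw [hFil] at hcE
    filter_upwards [hcE, Ioo_mem_nhdsGT (by norm_num : (0:ℝ) < 1)] with l hEl hl
    obtain ⟨hl0, hl1⟩ := hl
    set Ev : ℝ := (Real.exp (-l) * (pT (fun k => h k * (k : ℝ)) l - (h 1 * l + h 2 * l ^ 2)) - Real.exp (-l) ^ 2 * pT h l * (pT (fun k => (k : ℝ)) l - (l + l ^ 2))) with hEv
    rw [Real.norm_eq_abs, Real.norm_eq_abs, abs_of_nonneg (by positivity : (0:ℝ) ≤ l ^ 3)] at hEl ⊢
    have h1 : |Ev| ≤ cE * l ^ 3 := hEl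
    have h2 : |Ev * Ev / l| = |Ev| * |Ev| / l := by
      rw [abs_div, abs_mul, abs_of_nonneg hl0.le]
    rw [h2]
    have h3 : |Ev| * |Ev| ≤ (cE * l ^ 3) * (cE * l ^ 3) :=
      mul_le_mul h1 h1 (abs_nonneg _) (le_trans (abs_nonneg _) h1)
    have h4 : (0:ℝ) ≤ cE := by
      have := le_trans (abs_nonneg Ev) h1
      nlinarith [pow_pos hl0 3]
    calc |Ev| * |Ev| / l ≤ (cE * l ^ 3) * (cE * l ^ 3) / l := by
          exact (div_le_div_iff_of_pos_right hl0).mpr h3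
      _ = cE * cE * l ^ 5 := by field_simp
      _ ≤ cE * cE * l ^ 3 := by
          have h5 : l ^ 5 ≤ l ^ 3 := pow_le_pow_of_le_one hl0.le hl1.le (by norm_num)
          exact mul_le_mul_of_nonneg_left h5 (mul_nonneg h4 h4)
  have hQ1 : (fun l : ℝ => l ^ 3 * ((-3/2:ℝ) * (h 2 * h 2) + (6:ℝ) * (h 1 * h 2) + (-9/2:ℝ) * (h 1 * h 1) + (-3:ℝ) * (h 0 * h 2) + (3:ℝ) * (h 0 * h 1) + (-1:ℝ) * (h 0 * h 0) + (3:ℝ) * (h 2 * h 2) * l + (-9:ℝ) * (h 1 * h 2) * l + (4:ℝ) * (h 1 * h 1) * l + (3:ℝ) * (h 0 * h 2) * l + (1:ℝ) * (h 0 * h 1) * l + (-4:ℝ) * (h 0 * h 0) * l + (-15/4:ℝ) * (h 2 * h 2) * l ^ 2 + (13/2:ℝ) * (h 1 * h 2) * l ^ 2 + (7/4:ℝ) * (h 1 * h 1) * l ^ 2 + (2:ℝ) * (h 0 * h 2) * l ^ 2 + (-12:ℝ) * (h 0 * h 1) * l ^ 2 + (4:ℝ) * (h 0 * h 0) * l ^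 2 + (5/2:ℝ) * (h 2 * h 2) * l ^ 3 + (3:ℝ) * (h 1 * h 2) * l ^ 3 + (-8:ℝ) * (h 1 * h 1) * l ^ 3 + (-8:ℝ) * (h 0 * h 2) * l ^ 3 + (10:ℝ) * (h 0 * h 1) * l ^ 3 + (1:ℝ) * (h 2 * h 2) * l ^ 4 + (-10:ℝ) * (h 1 * h 2) * l ^ 4 + (6:ℝ) * (h 1 * h 1) * l ^ 4 + (6:ℝ) * (h 0 * h 2) * l ^ 4 + (-4:ℝ) * (h 0 * h 0) * l ^ 4 + (-3:ℝ) * (h 2 * h 2) * l ^ 5 + (7:ℝ) * (h 1 * h 2) * l ^ 5 + (-8:ℝ) * (h 0 * h 1) * l ^ 5 + (2:ℝ) * (h 2 * h 2) * l ^ 6 + (-4:ℝ) * (h 1 * h 1) * l ^ 6 + (-4:ℝ) * (h 0 * h 2) * l ^ 6 + (-4:ℝ) * (h 1 * h 2) * l ^ 7 + (-1:ℝ) * (h 2 * h 2) * l ^ 8)) =O[Fil] (fun l : ℝ => l ^ 3) :=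
    Omul' _ _ (isBigO_refl _ _) (Opoly _ (by fun_prop))
  have hBig := ((((hQ1.add hR2).sub hR3).sub hR4).sub hR5).sub hR6
  refine Filter.EventuallyEq.trans_isBigO ?_ hBig
  rw [hFil]
  filter_upwards [self_mem_nhdsWithin] with l hl
  have hl0 : (0:ℝ) < l := hl
  have hne : l ≠ 0 := ne_of_gt hl0
  simp only [pVar, pCov, pE_eq]
  field_simp
  ring
end

section
/- Let ξ ~ Poisson(λ) with λ → 0 and h(x) = I{x = 0} (indicator of zero). Then ρ(h,λ) = 1 - λ/6 + O(λ²), where ρ(h,λ) = corr(h(ξ) - r_λξ, ξ² - (2λ+1)ξ), r_λ = λ⁻¹Cov(h(ξ),ξ). -/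
open Real Filter Asymptotics Topology
open scoped BigOperators

lemma psum0 (x : ℝ) : HasSum (fun k : ℕ => x ^ k / k.factorial) (Real.exp x) := by
  have h := (Real.summable_pow_div_factorial x).hasSum
  have e : Real.exp x = ∑' k : ℕ, x ^ k / k.factorial := by
    rw [Real.exp_eq_exp_ℝ, NormedSpace.exp_eq_tsum_div]
  rwa [← e] at h

lemma pshift (f : ℕ → ℝ) (a : ℝ) (h0 : f 0 = 0) (h : HasSum (fun k => f (k + 1)) a) :
    HasSum f a := by
  have := (hasSum_nat_add_iff (f := f) 1).mp h
  simpa [h0] using this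

lemma psum1 (x : ℝ) : HasSum (fun k : ℕ => (k : ℝ) * x ^ k / k.factorial) (x * Real.exp x) := by
  apply pshift _ _ (by simp)
  have h := (psum0 x).mul_left x
  convert h using 2 with k
  case e'_3 => rfl
  have hk : ((k.factorial : ℝ)) ≠ 0 := Nat.cast_ne_zero.mpr k.factorial_ne_zero
  push_cast [Nat.factorial_succ]
  field_simp
  ring

lemma psum2 (x : ℝ) : HasSum (fun k : ℕ => (k : ℝ) ^ 2 * x ^ k / k.factorial)
    ((x ^ 2 + x) * Real.exp x) := by
  apply pshift _ _ (by simp)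
  have h := ((psum1 x).mul_left x).add ((psum0 x).mul_left x)
  have h2 : x * (x * Real.exp x) + x * Real.exp x = (x ^ 2 + x) * Real.exp x := by ring
  rw [h2] at h
  convert h using 2 with k
  case e'_3 => rfl
  have hk : ((k.factorial : ℝ)) ≠ 0 := Nat.cast_ne_zero.mpr k.factorial_ne_zero
  push_cast [Nat.factorial_succ]
  field_simp
  ring

lemma psum3 (x : ℝ) : HasSum (fun k : ℕ => (k : ℝ) ^ 3 * x ^ k / k.factorial)
    ((x ^ 3 + 3 * x ^ 2 + x) * Real.exp x) := by
  apply pshift _ _ (by simp)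
  have h := (((psum2 x).mul_left x).add (((psum1 x).mul_left (2*x)))).add ((psum0 x).mul_left x)
  have h2 : x * ((x ^ 2 + x) * Real.exp x) + 2 * x * (x * Real.exp x) + x * Real.exp x
      = (x ^ 3 + 3 * x ^ 2 + x) * Real.exp x := by ring
  rw [h2] at h
  convert h using 2 with k
  case e'_3 => rfl
  have hk : ((k.factorial : ℝ)) ≠ 0 := Nat.cast_ne_zero.mpr k.factorial_ne_zero
  push_cast [Nat.factorial_succ]
  field_simp
  ring

lemma psum4 (x : ℝ) : HasSum (fun k : ℕ => (k : ℝ) ^ 4 * x ^ k / k.factorial)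
    ((x ^ 4 + 6 * x ^ 3 + 7 * x ^ 2 + x) * Real.exp x) := by
  apply pshift _ _ (by simp)
  have h := ((((psum3 x).mul_left x).add (((psum2 x).mul_left (3*x)))).add
      ((psum1 x).mul_left (3*x))).add ((psum0 x).mul_left x)
  have h2 : x * ((x ^ 3 + 3 * x ^ 2 + x) * Real.exp x) + 3 * x * ((x ^ 2 + x) * Real.exp x)
      + 3 * x * (x * Real.exp x) + x * Real.exp x
      = (x ^ 4 + 6 * x ^ 3 + 7 * x ^ 2 + x) * Real.exp x := by ring
  rw [h2] at h
  convert h using 2 with k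
  case e'_3 => rfl
  have hk : ((k.factorial : ℝ)) ≠ 0 := Nat.cast_ne_zero.mpr k.factorial_ne_zero
  push_cast [Nat.factorial_succ]
  field_simp
  ring

lemma poisOf (x p : ℝ) (f : ℕ → ℝ)
    (h : HasSum (fun k : ℕ => f k * x ^ k / k.factorial) (p * Real.exp x)) :
    HasSum (fun k => poisPMF x k * f k) p := by
  have h2 := h.mul_left (Real.exp (-x))
  have hv : Real.exp (-x) * (p * Real.exp x) = p := by
    rw [mul_comm p, ← mul_assoc, ← Real.exp_add]; simp
  rw [hv] at h2
  convert h2 using 2 with k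
  case e'_3 => rfl
  simp only [poisPMF]; ring

lemma hpois1 (l : ℝ) : HasSum (fun k : ℕ => poisPMF l k * (k : ℝ)) l :=
  poisOf l l _ (by simpa using psum1 l)
lemma hpois2 (l : ℝ) : HasSum (fun k : ℕ => poisPMF l k * (k : ℝ) ^ 2) (l ^ 2 + l) :=
  poisOf l _ _ (psum2 l)
lemma hpois3 (l : ℝ) : HasSum (fun k : ℕ => poisPMF l k * (k : ℝ) ^ 3)
    (l ^ 3 + 3 * l ^ 2 + l) := poisOf l _ _ (psum3 l)
lemma hpois4 (l : ℝ) : HasSum (fun k : ℕ => poisPMF l k * (k : ℝ) ^ 4)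
    (l ^ 4 + 6 * l ^ 3 + 7 * l ^ 2 + l) := poisOf l _ _ (psum4 l)

lemma hpoisInd (l : ℝ) :
    HasSum (fun k : ℕ => poisPMF l k * (if k = 0 then (1 : ℝ) else 0)) (Real.exp (-l)) := by
  have he : (fun k : ℕ => poisPMF l k * (if k = 0 then (1 : ℝ) else 0)) =
      fun k : ℕ => if k = 0 then Real.exp (-l) else 0 := by
    funext k; rcases k with _ | k <;> simp [poisPMF]
  rw [he]
  exact hasSum_ite_eq 0 _

lemma cov_h_id (l : ℝ) :
    pCov l (fun k => if k = 0 then (1 : ℝ) else 0) (fun k => (k : ℝ)) =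
      -(Real.exp (-l) * l) := by
  have h1 : pE l (fun k : ℕ => (if k = 0 then (1:ℝ) else 0) * (k : ℝ)) = 0 := by
    rw [pE]
    have : (fun k : ℕ => poisPMF l k * ((if k = 0 then (1:ℝ) else 0) * (k : ℝ))) = fun _ => 0 := by
      funext k; rcases k with _ | k <;> simp
    rw [this, tsum_zero]
  have h2 : pE l (fun k => if k = 0 then (1:ℝ) else 0) = Real.exp (-l) := (hpoisInd l).tsum_eq
  have h3 : pE l (fun k => (k : ℝ)) = l := (hpois1 l).tsum_eq
  rw [pCov, h1, h2, h3]; ring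

lemma pCorr_closed (l : ℝ) (hl : 0 < l) :
    pCorr l
        (fun k => (if k = 0 then (1 : ℝ) else 0)
          - (l⁻¹ * pCov l (fun k => if k = 0 then (1 : ℝ) else 0)
              (fun k => (k : ℝ))) * (k : ℝ))
        (fun k => (k : ℝ) ^ 2 - (2 * l + 1) * (k : ℝ))
      = l / Real.sqrt (2 * (Real.exp l - 1 - l)) := by
  set c : ℝ := Real.exp (-l) with hc
  have hc0 : 0 < c := Real.exp_pos _
  have hce : c * Real.exp l = 1 := by rw [hc, ← Real.exp_add]; simp
  have hco : l⁻¹ * pCov l (fun k => if k = 0 then (1 : ℝ) else 0) (fun k => (k : ℝ)) = -c := by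
    rw [cov_h_id]; field_simp; rw [hc]
  rw [hco]
  -- now functions
  set f : ℕ → ℝ := fun k => (if k = 0 then (1 : ℝ) else 0) - (-c) * (k : ℝ) with hf
  set g : ℕ → ℝ := fun k => (k : ℝ) ^ 2 - (2 * l + 1) * (k : ℝ) with hg
  have hEf : pE l f = c + c * l := by
    rw [pE]
    have e : (fun k : ℕ => poisPMF l k * f k) =
        fun k : ℕ => poisPMF l k * (if k = 0 then (1 : ℝ) else 0) + c * (poisPMF l k * (k : ℝ)) := by
      funext k; simp only [hf]; ring
    rw [e]
    exact ((hpoisInd l).add ((hpois1 l).mul_left c)).tsum_eq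
  have hEg : pE l g = -(l ^ 2) := by
    rw [pE]
    have e : (fun k : ℕ => poisPMF l k * g k) =
        fun k : ℕ => poisPMF l k * (k : ℝ) ^ 2 + (-(2 * l + 1)) * (poisPMF l k * (k : ℝ)) := by
      funext k; simp only [hg]; ring
    rw [e]
    have := ((hpois2 l).add ((hpois1 l).mul_left (-(2 * l + 1)))).tsum_eq
    rw [this]; ring
  have hEff : pE l (fun k => f k * f k) = c + c ^ 2 * (l ^ 2 + l) := by
    rw [pE]
    have e : (fun k : ℕ => poisPMF l k * (f k * f k)) =
        fun k : ℕ => poisPMF l k * (if k = 0 then (1 : ℝ) else 0)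
          + c ^ 2 * (poisPMF l k * (k : ℝ) ^ 2) := by
      funext k; rcases k with _ | k <;> simp [hf] <;> ring
    rw [e]
    exact ((hpoisInd l).add ((hpois2 l).mul_left (c ^ 2))).tsum_eq
  have hEgg : pE l (fun k => g k * g k) = (l ^ 4 + 6 * l ^ 3 + 7 * l ^ 2 + l)
      - 2 * (2 * l + 1) * (l ^ 3 + 3 * l ^ 2 + l) + (2 * l + 1) ^ 2 * (l ^ 2 + l) := by
    rw [pE]
    have e : (fun k : ℕ => poisPMF l k * (g k * g k)) =
        fun k : ℕ => poisPMF l k * (k : ℝ) ^ 4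
          + (-(2 * (2 * l + 1))) * (poisPMF l k * (k : ℝ) ^ 3)
          + (2 * l + 1) ^ 2 * (poisPMF l k * (k : ℝ) ^ 2) := by
      funext k; simp only [hg]; ring
    rw [e]
    have := (((hpois4 l).add ((hpois3 l).mul_left (-(2 * (2 * l + 1))))).add
        ((hpois2 l).mul_left ((2 * l + 1) ^ 2))).tsum_eq
    rw [this]; ring
  have hEfg : pE l (fun k => f k * g k) =
      c * (l ^ 3 + 3 * l ^ 2 + l) + (-(c * (2 * l + 1))) * (l ^ 2 + l) := by
    rw [pE]
    have e : (fun k : ℕ => poisPMF l k * (f k * g k)) =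
        fun k : ℕ => c * (poisPMF l k * (k : ℝ) ^ 3)
          + (-(c * (2 * l + 1))) * (poisPMF l k * (k : ℝ) ^ 2) := by
      funext k; rcases k with _ | k
      · simp [hf, hg]
      · simp only [hf, hg, if_neg (Nat.succ_ne_zero k)]; ring
    rw [e]
    exact (((hpois3 l).mul_left c).add ((hpois2 l).mul_left (-(c * (2 * l + 1))))).tsum_eq
  -- variances and covariance
  have hVf : pVar l f = c ^ 2 * (Real.exp l - 1 - l) := by
    rw [pVar, pCov, hEff, hEf]
    linear_combination (-c) * hce
  have hVg : pVar l g = 2 * l ^ 2 := by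
    rw [pVar, pCov, hEgg, hEg]; ring
  have hCfg : pCov l f g = c * l ^ 2 := by
    rw [pCov, hEfg, hEf, hEg]; ring
  -- assemble
  have hEpos : 0 < Real.exp l - 1 - l := by
    have := Real.add_one_lt_exp hl.ne'
    linarith
  rw [pCorr, hCfg, hVf, hVg]
  rw [show c ^ 2 * (Real.exp l - 1 - l) = c ^ 2 * (Real.exp l - 1 - l) from rfl]
  rw [Real.sqrt_mul (sq_nonneg c), Real.sqrt_sq hc0.le]
  rw [show (2 : ℝ) * l ^ 2 = l ^ 2 * 2 by ring, Real.sqrt_mul (sq_nonneg l),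
    Real.sqrt_sq hl.le]
  rw [show (2 : ℝ) * (Real.exp l - 1 - l) = 2 * (Real.exp l - 1 - l) from rfl,
    Real.sqrt_mul (by norm_num : (0:ℝ) ≤ 2)]
  have hsE : 0 < Real.sqrt (Real.exp l - 1 - l) := Real.sqrt_pos.mpr hEpos
  have hs2 : 0 < Real.sqrt 2 := by positivity
  field_simp

lemma rho_asympt :
    (fun l : ℝ => l / Real.sqrt (2 * (Real.exp l - 1 - l)) - (1 - l / 6))
      =O[𝓝[>] (0 : ℝ)] fun l : ℝ => l ^ 2 := by
  rw [isBigO_iff]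
  refine ⟨1, ?_⟩
  filter_upwards [Ioo_mem_nhdsGT_of_mem
    (by norm_num : (0 : ℝ) ∈ Set.Ico (0 : ℝ) (1 / 2))] with l hl
  obtain ⟨hl0, hl2⟩ := hl
  have hb := Real.exp_bound (x := l) (by rw [abs_of_pos hl0]; linarith)
    (n := 4) (by norm_num)
  have hsum : ∑ m ∈ Finset.range 4, l ^ m / (m.factorial : ℝ)
      = 1 + l + l ^ 2 / 2 + l ^ 3 / 6 := by
    rw [Finset.sum_range_succ, Finset.sum_range_succ, Finset.sum_range_succ,
      Finset.sum_range_succ, Finset.sum_range_zero]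
    norm_num [Nat.factorial]
  rw [hsum, abs_of_pos hl0] at hb
  norm_num [Nat.factorial] at hb
  have hb' : |Real.exp l - (1 + l + l ^ 2 / 2 + l ^ 3 / 6)| ≤ 5 * l ^ 4 / 96 := by
    refine hb.trans (le_of_eq ?_); ring
  rw [abs_le] at hb'
  have hE1 : l ^ 2 + l ^ 3 / 3 - 5 * l ^ 4 / 48 ≤ 2 * (Real.exp l - 1 - l) := by linarith
  have hE2 : 2 * (Real.exp l - 1 - l) ≤ l ^ 2 + l ^ 3 / 3 + 5 * l ^ 4 / 48 := by linarith
  have hEpos : 0 < 2 * (Real.exp l - 1 - l) := by nlinarith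
  set s := Real.sqrt (2 * (Real.exp l - 1 - l)) with hs
  have hspos : 0 < s := Real.sqrt_pos.mpr hEpos
  have hss : s ^ 2 = 2 * (Real.exp l - 1 - l) := Real.sq_sqrt hEpos.le
  -- upper bound
  have hbpos : (0:ℝ) < 1 - l / 6 + l ^ 2 := by nlinarith
  have h3 : l ^ 3 ≤ l ^ 2 := by nlinarith
  have h4 : l ^ 4 ≤ l ^ 2 := by nlinarith
  have h5 : l ^ 5 ≤ l ^ 2 := by nlinarith
  have h6 : l ^ 6 ≤ l ^ 2 := by nlinarith
  have p3 : (0:ℝ) < l ^ 3 := pow_pos hl0 3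
  have p4 : (0:ℝ) < l ^ 4 := pow_pos hl0 4
  have p5 : (0:ℝ) < l ^ 5 := pow_pos hl0 5
  have q1 : (1:ℝ) ≤ (1 - l / 6 + l ^ 2) ^ 2 * (1 + l / 3 - 5 * l ^ 2 / 48) := by linarith [h6, p3.le, p4.le, p5.le, sq_nonneg l]
  have key1 : l ^ 2 ≤ ((1 - l / 6 + l ^ 2) * s) ^ 2 := by
    have h2 : l ^ 2 * 1 ≤ l ^ 2 * ((1 - l / 6 + l ^ 2) ^ 2 * (1 + l / 3 - 5 * l ^ 2 / 48)) :=
      mul_le_mul_of_nonneg_left q1 (sq_nonneg l)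
    have h3 : (1 - l / 6 + l ^ 2) ^ 2 * (l ^ 2 + l ^ 3 / 3 - 5 * l ^ 4 / 48)
        ≤ (1 - l / 6 + l ^ 2) ^ 2 * (2 * (Real.exp l - 1 - l)) :=
      mul_le_mul_of_nonneg_left hE1 (sq_nonneg _)
    calc l ^ 2 = l ^ 2 * 1 := by ring
      _ ≤ l ^ 2 * ((1 - l / 6 + l ^ 2) ^ 2 * (1 + l / 3 - 5 * l ^ 2 / 48)) := h2
      _ = (1 - l / 6 + l ^ 2) ^ 2 * (l ^ 2 + l ^ 3 / 3 - 5 * l ^ 4 / 48) := by ring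
      _ ≤ (1 - l / 6 + l ^ 2) ^ 2 * (2 * (Real.exp l - 1 - l)) := h3
      _ = ((1 - l / 6 + l ^ 2) * s) ^ 2 := by rw [mul_pow, hss]
  have hub : l / s ≤ 1 - l / 6 + l ^ 2 := by
    rw [div_le_iff₀ hspos]
    have := Real.sqrt_le_sqrt key1
    rwa [Real.sqrt_sq hl0.le, Real.sqrt_sq (mul_nonneg hbpos.le hspos.le)] at this
  -- lower bound
  have hsq : l ^ 2 ≤ 1 / 4 := by
    have := mul_le_mul hl2.le hl2.le hl0.le (by norm_num : (0:ℝ) ≤ 1/2)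
    calc l ^ 2 = l * l := sq l
      _ ≤ 1 / 2 * (1 / 2) := this
      _ = 1 / 4 := by norm_num
  have hapos : (0:ℝ) ≤ 1 - l / 6 - l ^ 2 := by linarith
  have q2 : (1 - l / 6 - l ^ 2) ^ 2 * (1 + l / 3 + 5 * l ^ 2 / 48) ≤ 1 := by linarith [h4, h5, h6, p3.le, sq_nonneg l]
  have key2 : ((1 - l / 6 - l ^ 2) * s) ^ 2 ≤ l ^ 2 := by
    have h3 : (1 - l / 6 - l ^ 2) ^ 2 * (2 * (Real.exp l - 1 - l))
        ≤ (1 - l / 6 - l ^ 2) ^ 2 * (l ^ 2 + l ^ 3 / 3 + 5 * l ^ 4 / 48) :=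
      mul_le_mul_of_nonneg_left hE2 (sq_nonneg _)
    have h2 : l ^ 2 * ((1 - l / 6 - l ^ 2) ^ 2 * (1 + l / 3 + 5 * l ^ 2 / 48)) ≤ l ^ 2 * 1 :=
      mul_le_mul_of_nonneg_left q2 (sq_nonneg l)
    calc ((1 - l / 6 - l ^ 2) * s) ^ 2
        = (1 - l / 6 - l ^ 2) ^ 2 * (2 * (Real.exp l - 1 - l)) := by rw [mul_pow, hss]
      _ ≤ (1 - l / 6 - l ^ 2) ^ 2 * (l ^ 2 + l ^ 3 / 3 + 5 * l ^ 4 / 48) := h3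
      _ = l ^ 2 * ((1 - l / 6 - l ^ 2) ^ 2 * (1 + l / 3 + 5 * l ^ 2 / 48)) := by ring
      _ ≤ l ^ 2 * 1 := h2
      _ = l ^ 2 := by ring
  have hlb : 1 - l / 6 - l ^ 2 ≤ l / s := by
    rw [le_div_iff₀ hspos]
    have := Real.sqrt_le_sqrt key2
    rwa [Real.sqrt_sq hl0.le, Real.sqrt_sq (mul_nonneg hapos hspos.le)] at this
  -- conclude
  rw [Real.norm_eq_abs, Real.norm_eq_abs, one_mul, abs_of_pos (by positivity : (0:ℝ) < l ^ 2)]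
  rw [abs_le]
  constructor <;> [linarith; linarith]

/-- For `h = I{x = 0}`, as `λ → 0⁺`, `ρ(h,λ) = 1 - λ/6 + O(λ²)`. -/
theorem rho_indicator_zero_expansion :
    (fun l : ℝ =>
        pCorr l
          (fun k => (if k = 0 then (1 : ℝ) else 0)
            - (l⁻¹ * pCov l (fun k => if k = 0 then (1 : ℝ) else 0)
                (fun k => (k : ℝ))) * (k : ℝ))
          (fun k => (k : ℝ) ^ 2 - (2 * l + 1) * (k : ℝ))
        - (1 - l / 6))
      =O[𝓝[>] (0 : ℝ)] fun l : ℝ => l ^ 2 := by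
  refine rho_asympt.congr' ?_ EventuallyEq.rfl
  filter_upwards [self_mem_nhdsWithin] with l hl
  rw [pCorr_closed l hl]
end
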